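/- arXiv:2309.08370 — 4 statements merged into one kernel-verified Lean document; each statement's English description precedes it below -/
import Mathlib

section
/- For an integer t ≥ 5, if e1 and e2 are two non-adjacent edges of the complete graph K_t, then the number of copies of the path P_5 (path on 5 vertices) in K_t containing both e1 and e2 is exactly 12(t-4). -/
/-!
A copy of `P₅` through the disjoint edges `ab` and `cd` of `K_t` is traced by exactly two vertex
embeddings `Fin 5 ↪ Fin t`, since the only automorphisms of a path are the identity and the
reversal, and exactly one of the two visits `a` immediately before `b`. Such an embedding uses
`a, b, c, d` and one further vertex `x`, chosen in `t - 4` ways, and it is `![x, a, b, c, d] ∘ σ`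
for one of the 12 permutations `σ` of `Fin 5` in which `1` is immediately followed by `2` and in
which `3` and `4` are consecutive.
-/

open SimpleGraph

open Function Equiv Set

theorem Function.Embedding.exists_apply_notMem_range {α β V : Type*} [Finite β] (f : α ↪ V)
    (g : β → V) (h : Nat.card β < Nat.card α) : ∃ i, f i ∉ range g := by
  by_contra! hf
  choose π hπ using hf
  exact h.not_ge <| Nat.card_le_card_of_injective π fun i j hij ↦
    f.injective (by rw [← hπ, ← hπ, hij])

theorem Function.Embedding.exists_perm_apply_eq_of_range_subset {α V : Type*} [Finite α]
    (f w : α ↪ V) (h : range w ⊆ range f) : ∃ σ : Perm α, ∀ i, f i = w (σ i) := by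
  choose τ hτ using fun i ↦ h ⟨i, rfl⟩
  let σ := Equiv.ofBijective τ <| Finite.injective_iff_bijective.1 fun i j hij ↦
    w.injective (by rw [← hτ, ← hτ, hij])
  refine ⟨σ.symm, fun i ↦ ?_⟩
  conv_lhs => rw [← σ.apply_symm_apply i]
  exact hτ _

theorem natCard_embeddings_eq_natCard_compl_range_mul {V : Type*} {k : ℕ} {g : Fin k → V}
    (hg : Injective g) (Q : (Fin (k + 1) ↪ V) → Prop) (S : Set (Perm (Fin (k + 1))))
    (hQ : ∀ f, Q f → range g ⊆ range f)
    (hQS : ∀ (f : Fin (k + 1) ↪ V) x σ, x ∉ range g →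
      (∀ i, f i = (Fin.cons x g : Fin (k + 1) → V) (σ i)) → (Q f ↔ σ ∈ S)) :
    Nat.card {f // Q f} = Nat.card ↥(range g)ᶜ * Nat.card S := by
  rw [← Nat.card_prod]
  symm
  refine Nat.card_congr (.ofBijective (fun p ↦
    ⟨p.2.1.toEmbedding.trans
      ⟨(Fin.cons p.1.1 g : Fin (k + 1) → V), Fin.cons_injective_iff.2 ⟨p.1.2, hg⟩⟩,
      (hQS _ _ _ p.1.2 fun _ ↦ rfl).2 p.2.2⟩) ⟨?_, ?_⟩)
  · intro p q h
    have happ : ∀ i, (Fin.cons p.1.1 g : Fin (k + 1) → V) (p.2.1 i) =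
        (Fin.cons q.1.1 g : Fin (k + 1) → V) (q.2.1 i) :=
      DFunLike.congr_fun (congrArg Subtype.val h)
    have hx : p.1.1 = q.1.1 := by
      have hx₀ : p.1.1 ∈ range (Fin.cons q.1.1 g : Fin (k + 1) → V) :=
        ⟨q.2.1 (p.2.1.symm 0), by simpa using (happ (p.2.1.symm 0)).symm⟩
      exact (by simpa [Fin.range_cons] using hx₀ : _ ∨ _).resolve_right p.1.2
    have hσ : p.2.1 = q.2.1 := Equiv.ext fun i ↦
      Fin.cons_injective_iff.2 ⟨p.1.2, hg⟩ ((happ i).trans (by rw [hx]))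
    exact Prod.ext (Subtype.ext hx) (Subtype.ext hσ)
  · rintro ⟨f, hf⟩
    obtain ⟨i, hi⟩ := f.exists_apply_notMem_range g (by simp)
    let w : Fin (k + 1) ↪ V := ⟨Fin.cons (f i) g, Fin.cons_injective_iff.2 ⟨hi, hg⟩⟩
    obtain ⟨σ, hσ⟩ := f.exists_perm_apply_eq_of_range_subset w <| by
      simpa [w, Fin.range_cons, insert_subset_iff] using hQ f hf
    exact ⟨⟨⟨f i, hi⟩, σ, (hQS f _ σ hi hσ).1 hf⟩,
      Subtype.ext (DFunLike.ext _ _ fun j ↦ (hσ j).symm)⟩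

namespace SimpleGraph

variable {V : Type*} {n : ℕ}

theorem pathGraph_adj_rev_rev {u v : Fin n} :
    (pathGraph n).Adj u.rev v.rev ↔ (pathGraph n).Adj u v := by
  simp only [pathGraph_adj, Fin.val_rev]
  omega

theorem pathGraph_injective_map_eq_id {τ : Fin n → Fin n} (hτ : Injective τ)
    (hadj : ∀ {i j}, (pathGraph n).Adj i j → (pathGraph n).Adj (τ i) (τ j))
    (hn : 2 ≤ n) (hstep : (τ ⟨1, hn⟩ : ℕ) = τ ⟨0, by omega⟩ + 1) : τ = id := by
  set c : ℕ := (τ ⟨0, by omega⟩ : ℕ)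
  -- an injective walk along the path never turns back
  have hpair : ∀ k (hk : k + 1 < n),
      (τ ⟨k, by omega⟩ : ℕ) = c + k ∧ (τ ⟨k + 1, hk⟩ : ℕ) = c + k + 1 := by
    intro k
    induction k with
    | zero => exact fun _ ↦ ⟨rfl, hstep⟩
    | succ k ih =>
      intro hk
      obtain ⟨hk₀, hk₁⟩ := ih (by omega)
      have hne : τ ⟨k + 1 + 1, hk⟩ ≠ τ ⟨k, by omega⟩ :=
        hτ.ne (Fin.ne_of_val_ne (by simp only; omega))
      have hadj' := pathGraph_adj.1 <| hadj (pathGraph_adj.2 (Or.inl rfl) :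
        (pathGraph n).Adj ⟨k + 1, by omega⟩ ⟨k + 1 + 1, hk⟩)
      rw [Ne, Fin.ext_iff] at hne
      omega
  have hval : ∀ i : Fin n, (τ i : ℕ) = c + i := by
    rintro ⟨_ | k, hi⟩
    · rfl
    · simpa [add_assoc] using (hpair k hi).2
  have hc : c = 0 := by
    have hlast := hval ⟨n - 1, by omega⟩
    have := (τ ⟨n - 1, by omega⟩).isLt
    simp only at hlast
    omega
  funext i
  exact Fin.ext (by simp [hval, hc])

theorem pathGraph_hom_eq_id_or_eq_rev (τ : pathGraph n →g pathGraph n) (hτ : Injective τ) :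
    ⇑τ = id ∨ ⇑τ = Fin.rev := by
  rcases Nat.lt_or_ge n 2 with hn | hn
  · have : Subsingleton (Fin n) := Fin.subsingleton_iff_le_one.2 (by omega)
    exact Or.inl (funext fun _ ↦ Subsingleton.elim _ _)
  rcases pathGraph_adj.1 (τ.map_adj (pathGraph_adj.2 (Or.inl rfl) :
      (pathGraph n).Adj ⟨0, by omega⟩ ⟨1, hn⟩)) with hup | hdown
  · exact Or.inl (pathGraph_injective_map_eq_id hτ τ.map_adj hn hup.symm)
  · have hrev := pathGraph_injective_map_eq_id (Fin.rev_injective.comp hτ)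
      (fun h ↦ pathGraph_adj_rev_rev.2 (τ.map_adj h)) hn
      (by simp only [comp_apply, Fin.val_rev]; omega)
    exact Or.inr (funext fun i ↦ by simpa using congrArg Fin.rev (congrFun hrev i))

def pathCopy (f : Fin n ↪ V) : Copy (pathGraph n) (⊤ : SimpleGraph V) :=
  ⟨⟨f, fun h ↦ f.injective.ne h.ne⟩, f.injective⟩

def pathSubgraph (f : Fin n ↪ V) : (⊤ : SimpleGraph V).Subgraph :=
  (pathCopy f).toSubgraph

theorem pathSubgraph_verts (f : Fin n ↪ V) : (pathSubgraph f).verts = range f := by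
  simp [pathSubgraph, pathCopy]

theorem pathSubgraph_adj {f : Fin n ↪ V} {u v : V} :
    (pathSubgraph f).Adj u v ↔ ∃ i j, (pathGraph n).Adj i j ∧ f i = u ∧ f j = v := by
  simp [pathSubgraph, pathCopy, Relation.Map]

theorem pathSubgraph_adj_apply {f : Fin n ↪ V} {i j : Fin n} :
    (pathSubgraph f).Adj (f i) (f j) ↔ (pathGraph n).Adj i j := by
  simp [pathSubgraph_adj]

theorem nonempty_pathSubgraph_iso (f : Fin n ↪ V) :
    Nonempty ((pathSubgraph f).coe ≃g pathGraph n) :=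
  ⟨(pathCopy f).isoToSubgraph.symm⟩

theorem exists_pathSubgraph_eq {H : (⊤ : SimpleGraph V).Subgraph}
    (e : H.coe ≃g pathGraph n) : ∃ f : Fin n ↪ V, pathSubgraph f = H := by
  obtain ⟨c, rfl⟩ : H ∈ range (Copy.toSubgraph (A := pathGraph n)) := by
    simpa using ⟨e.symm⟩
  exact ⟨c.toEmbedding, rfl⟩

theorem pathSubgraph_rev (f : Fin n ↪ V) :
    pathSubgraph (Fin.revPerm.toEmbedding.trans f) = pathSubgraph f := by
  ext u v
  · simp only [pathSubgraph_verts, Embedding.coe_trans, coe_toEmbedding]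
    rw [Fin.revPerm.surjective.range_comp]
  · simp only [pathSubgraph_adj, Embedding.trans_apply, coe_toEmbedding, Fin.revPerm_apply]
    constructor
    · rintro ⟨i, j, h, rfl, rfl⟩
      exact ⟨i.rev, j.rev, pathGraph_adj_rev_rev.2 h, rfl, rfl⟩
    · rintro ⟨i, j, h, rfl, rfl⟩
      exact ⟨i.rev, j.rev, pathGraph_adj_rev_rev.2 h, by simp, by simp⟩

theorem eq_or_eq_rev_of_pathSubgraph_eq {f g : Fin n ↪ V}
    (h : pathSubgraph f = pathSubgraph g) : g = f ∨ g = Fin.revPerm.toEmbedding.trans f := by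
  have hmem : ∀ i, g i ∈ range f := fun i ↦ by
    rw [← pathSubgraph_verts, h, pathSubgraph_verts]
    exact ⟨i, rfl⟩
  choose τ hτ using hmem
  have hτinj : Injective τ := fun i j hij ↦ g.injective (by rw [← hτ, ← hτ, hij])
  let τ' : pathGraph n →g pathGraph n := ⟨τ, fun {i j} hij ↦ by
    rwa [← pathSubgraph_adj_apply (f := f), hτ, hτ, h, pathSubgraph_adj_apply]⟩
  rcases pathGraph_hom_eq_id_or_eq_rev τ' hτinj with hid | hrev
  · exact Or.inl (DFunLike.ext _ _ fun i ↦ by simp [← hτ, show τ i = i from congrFun hid i])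
  · exact Or.inr (DFunLike.ext _ _ fun i ↦ by simp [← hτ, show τ i = i.rev from congrFun hrev i])

theorem natCard_subgraphs_iso_pathGraph_through_edge (a b : V)
    (P : (⊤ : SimpleGraph V).Subgraph → Prop) :
    Nat.card {H : (⊤ : SimpleGraph V).Subgraph //
      Nonempty (H.coe ≃g pathGraph n) ∧ s(a, b) ∈ H.edgeSet ∧ P H} =
    Nat.card {f : Fin n ↪ V //
      (∃ i j : Fin n, (i : ℕ) + 1 = j ∧ f i = a ∧ f j = b) ∧ P (pathSubgraph f)} := by
  symm
  refine Nat.card_congr (.ofBijective (fun f ↦ ⟨pathSubgraph f.1, nonempty_pathSubgraph_iso _,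
    ?_, f.2.2⟩) ⟨?_, ?_⟩)
  · obtain ⟨i, j, hij, hi, hj⟩ := f.2.1
    exact pathSubgraph_adj.2 ⟨i, j, pathGraph_adj.2 (Or.inl hij), hi, hj⟩
  · intro f g h
    rcases eq_or_eq_rev_of_pathSubgraph_eq (congrArg Subtype.val h) with hfg | hfg
    · exact Subtype.ext hfg.symm
    · obtain ⟨i, j, hij, hi, hj⟩ := f.2.1
      obtain ⟨i', j', hij', hi', hj'⟩ := g.2.1
      rw [hfg] at hi' hj'
      have hii' := hi'.trans hi.symm
      have hjj' := hj'.trans hj.symm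
      simp only [Embedding.trans_apply, coe_toEmbedding, Fin.revPerm_apply,
        f.1.injective.eq_iff, Fin.ext_iff, Fin.val_rev] at hii' hjj'
      omega
  · rintro ⟨H, ⟨e⟩, hab, hP⟩
    obtain ⟨f, rfl⟩ := exists_pathSubgraph_eq e
    obtain ⟨i, j, hij, rfl, rfl⟩ := pathSubgraph_adj.1 hab
    rcases pathGraph_adj.1 hij with h | h
    · exact ⟨⟨f, ⟨i, j, h, rfl, rfl⟩, hP⟩, rfl⟩
    · refine ⟨⟨Fin.revPerm.toEmbedding.trans f,
        ⟨i.rev, j.rev, by simp only [Fin.val_rev]; omega, by simp, by simp⟩, ?_⟩,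
        Subtype.ext (pathSubgraph_rev f)⟩
      rwa [pathSubgraph_rev]

theorem natCard_perm_fin_five_adjacent_pairs :
    Nat.card {σ : Perm (Fin 5) | (∃ i j : Fin 5, (i : ℕ) + 1 = j ∧ σ i = 1 ∧ σ j = 2) ∧
      ∃ i j, (pathGraph 5).Adj i j ∧ σ i = 3 ∧ σ j = 4} = 12 := by
  simp only [pathGraph_adj, coe_ofPred]
  rw [Nat.card_eq_fintype_card]
  decide

theorem natCard_fin_five_embeddings_through_two_edges [Finite V] {g : Fin 4 → V}
    (hg : Injective g) :
    Nat.card {f : Fin 5 ↪ V // (∃ i j : Fin 5, (i : ℕ) + 1 = j ∧ f i = g 0 ∧ f j = g 1) ∧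
      s(g 2, g 3) ∈ (pathSubgraph f).edgeSet} = 12 * (Nat.card V - 4) := by
  rw [natCard_embeddings_eq_natCard_compl_range_mul hg _ _ ?_ ?_,
    natCard_perm_fin_five_adjacent_pairs, Nat.card_coe_set_eq, ncard_compl,
    ncard_range_of_injective hg, Nat.card_fin, mul_comm]
  · rintro f ⟨⟨i, j, -, hi, hj⟩, hcd⟩
    obtain ⟨i', j', -, hi', hj'⟩ := pathSubgraph_adj.1 hcd
    rintro _ ⟨p, rfl⟩
    fin_cases p
    exacts [⟨i, hi⟩, ⟨j, hj⟩, ⟨i', hi'⟩, ⟨j', hj'⟩]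
  · intro f x σ hx hf
    have hw : Injective (Fin.cons x g : Fin (4 + 1) → V) := Fin.cons_injective_iff.2 ⟨hx, hg⟩
    have hpos : ∀ {q : Fin 4} {p : Fin (4 + 1)},
        (Fin.cons x g : Fin (4 + 1) → V) p = g q ↔ p = q.succ :=
      hw.eq_iff' rfl
    simp only [Subgraph.mem_edgeSet, pathSubgraph_adj, hf, mem_ofPred_eq, hpos]
    rfl

end SimpleGraph

theorem stmt_3_general (t : ℕ) (e1 e2 : Sym2 (Fin t))
    (he1 : e1 ∈ (⊤ : SimpleGraph (Fin t)).edgeSet)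
    (he2 : e2 ∈ (⊤ : SimpleGraph (Fin t)).edgeSet)
    (hnadj : ∀ v : Fin t, ¬(v ∈ e1 ∧ v ∈ e2)) :
    Nat.card {H : (⊤ : SimpleGraph (Fin t)).Subgraph //
      Nonempty (H.coe ≃g pathGraph 5) ∧ e1 ∈ H.edgeSet ∧ e2 ∈ H.edgeSet} = 12 * (t - 4) := by
  induction e1 using Sym2.ind with | _ a b =>
  induction e2 using Sym2.ind with | _ c d =>
  simp only [mem_edgeSet, top_adj] at he1 he2
  have ha := hnadj a
  have hb := hnadj b
  simp only [Sym2.mem_iff, true_or, or_true, true_and, not_or] at ha hb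
  have hg : Injective ![a, b, c, d] := by
    refine Fin.cons_injective_iff.2 ⟨?_, Fin.cons_injective_iff.2 ⟨?_,
      Fin.cons_injective_iff.2 ⟨?_, injective_of_subsingleton _⟩⟩⟩ <;>
    simp [Matrix.range_cons, *]
  rw [natCard_subgraphs_iso_pathGraph_through_edge]
  exact (natCard_fin_five_embeddings_through_two_edges hg).trans (by rw [Nat.card_fin])

theorem stmt_3 (t : ℕ) (ht : 5 ≤ t) (e1 e2 : Sym2 (Fin t))
    (he1 : e1 ∈ (⊤ : SimpleGraph (Fin t)).edgeSet)
    (he2 : e2 ∈ (⊤ : SimpleGraph (Fin t)).edgeSet)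
    (hnadj : ∀ v : Fin t, ¬(v ∈ e1 ∧ v ∈ e2)) :
    Nat.card {H : (⊤ : SimpleGraph (Fin t)).Subgraph //
      Nonempty (H.coe ≃g pathGraph 5) ∧ e1 ∈ H.edgeSet ∧ e2 ∈ H.edgeSet} = 12 * (t - 4) :=
  stmt_3_general t e1 e2 he1 he2 hnadj
end

section
/- For an integer t ≥ 5, if e1 and e2 are two distinct adjacent edges of the complete graph K_t, then the number of copies of the path P_5 in K_t containing both e1 and e2 is exactly 3(t-3)(t-4). -/
/-!
A copy of `P_n` in `K_t` is the image of an injective sequence of `n` vertices, and that sequence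
is unique up to reversal, because the only automorphisms of a path are the identity and the
reversal. A copy contains the edges `ab` and `bc` exactly when `a, b, c` occur consecutively in the
sequence, and orienting the sequence so that `a` comes before `c` makes it unique. Such a sequence
is determined by the position of `a` (three choices for `P_5`) and an injective filling of the two
remaining positions by vertices outside `{a, b, c}`, hence `3 (t - 3) (t - 4)` copies.
-/

open Function SimpleGraph

theorem Nat.card_embedding_extending {α β γ : Type*} [Fintype α] [Fintype β] [Fintype γ]
    (e : γ ↪ α) (p : γ ↪ β) :
    Nat.card {f : α ↪ β // ∀ x, f (e x) = p x} =
      (Fintype.card β - Fintype.card γ).descFactorial (Fintype.card α - Fintype.card γ) := by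
  classical
  let split : (α ↪ β) ≃ Σ g : γ ↪ β, ↥(Set.range e)ᶜ ↪ ↥(Set.range g)ᶜ :=
    (((Equiv.ofInjective e e.injective).sumCongr (Equiv.refl _)).trans
      (Equiv.Set.sumCompl _)).symm.embeddingCongr (Equiv.refl β) |>.trans
      Equiv.sumEmbeddingEquivSigmaEmbeddingRestricted
  -- The first component of `split f` is `f ∘ e`.
  have hsplit : ∀ f : α ↪ β, (∀ x, f (e x) = p x) ↔ (split f).1 = p := fun f => by
    rw [DFunLike.ext_iff]; rfl
  rw [Nat.card_congr ((split.subtypeEquiv hsplit).trans (Equiv.sigmaSubtype p)),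
    Nat.card_eq_fintype_card, Fintype.card_embedding_eq, Fintype.card_compl_set,
    Fintype.card_compl_set, Fintype.card_range, Fintype.card_range]

namespace SimpleGraph

section Copy

variable {α β : Type*} {A : SimpleGraph α} {B : SimpleGraph β}

@[simp] lemma Iso.coe_toCopy (σ : A ≃g B) : ⇑σ.toCopy = σ := rfl

instance [Finite α] [Finite β] : Finite (Copy A B) := DFunLike.finite _

def Copy.topEquiv (A : SimpleGraph α) : Copy A (⊤ : SimpleGraph β) ≃ (α ↪ β) where
  toFun f := f.toEmbedding
  invFun g := ⟨⟨g, fun h => g.injective.ne h.ne⟩, g.injective⟩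
  left_inv _ := rfl
  right_inv _ := rfl

lemma Copy.toSubgraph_verts (f : Copy A B) : f.toSubgraph.verts = Set.range f := by
  simp [Subgraph.map_verts]

lemma Copy.toSubgraph_adj_apply (f : Copy A B) {u v : α} :
    f.toSubgraph.Adj (f u) (f v) ↔ A.Adj u v := by
  have hf : Injective f := f.injective
  simp [Subgraph.map_adj, Relation.Map, hf.eq_iff]

lemma Copy.toSubgraph_comp_iso (f : Copy A B) (σ : A ≃g A) :
    (f.comp σ.toCopy).toSubgraph = f.toSubgraph := by
  refine Subgraph.ext ?_ ?_
  · simp only [Subgraph.map_verts, Subgraph.verts_top, Set.image_univ]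
    exact σ.surjective.range_comp f
  · ext x y
    simp only [Subgraph.map_adj, Relation.Map, Subgraph.top_adj, Copy.coe_toHom, Copy.comp_apply]
    constructor
    · rintro ⟨a, b, hab, rfl, rfl⟩
      exact ⟨σ a, σ b, σ.map_adj_iff.2 hab, rfl, rfl⟩
    · rintro ⟨a, b, hab, rfl, rfl⟩
      exact ⟨σ.symm a, σ.symm b, σ.symm.map_adj_iff.2 hab, by simp, by simp⟩

lemma Copy.exists_iso_of_toSubgraph_eq {f f' : Copy A B} (h : f.toSubgraph = f'.toSubgraph) :
    ∃ σ : A ≃g A, ⇑f' = f ∘ σ := by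
  have hr : Set.range f' = Set.range f := by rw [← toSubgraph_verts, ← toSubgraph_verts, h]
  let σ : α ≃ α := (Equiv.ofInjective f' f'.injective).trans
    ((Equiv.setCongr hr).trans (Equiv.ofInjective f f.injective).symm)
  have hσ : ∀ a, f (σ a) = f' a := fun a => Equiv.apply_ofInjective_symm f.injective _
  refine ⟨⟨σ, fun {u v} => ?_⟩, funext fun a => (hσ a).symm⟩
  rw [← f.toSubgraph_adj_apply, hσ, hσ, h, f'.toSubgraph_adj_apply]

end Copy

section PathGraph

def pathGraph.reverse (n : ℕ) : pathGraph n ≃g pathGraph n :=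
  ⟨Fin.revPerm, by simp only [Fin.revPerm_apply, pathGraph_adj, Fin.val_rev]; omega⟩

@[simp] lemma pathGraph.reverse_apply {n : ℕ} (i : Fin n) : pathGraph.reverse n i = i.rev := rfl

lemma Copy.pathGraph_val_eq_add_of_lt {m n : ℕ} (f : Copy (pathGraph (m + 2)) (pathGraph n))
    (hup : f 0 < f 1) (j : Fin (m + 2)) : (f j : ℕ) = f 0 + j := by
  have step : ∀ i (h : i + 1 < m + 2),
      (f ⟨i, by omega⟩ : ℕ) + 1 = f ⟨i + 1, h⟩ ∨ (f ⟨i + 1, h⟩ : ℕ) + 1 = f ⟨i, by omega⟩ :=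
    fun i h => pathGraph_adj.1 (f.toHom.map_adj (pathGraph_adj.2 (Or.inl rfl)))
  -- Injectivity forbids turning back, so every step goes up like the first one.
  have no_turn : ∀ i (h : i + 1 + 1 < m + 2), (f ⟨i, by omega⟩ : ℕ) ≠ f ⟨i + 1 + 1, h⟩ :=
    fun i h e => by have := f.injective (Fin.ext e); rw [Fin.mk.injEq] at this; omega
  suffices ∀ i (h : i < m + 2), (f ⟨i, h⟩ : ℕ) = f 0 + i ∧
      ∀ h' : i + 1 < m + 2, (f ⟨i + 1, h'⟩ : ℕ) = f ⟨i, h⟩ + 1 from (this j j.2).1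
  intro i h
  induction i with
  | zero =>
    refine ⟨rfl, fun h' => ?_⟩
    have := step 0 h'
    have : f ⟨0 + 1, h'⟩ = f 1 := congrArg f (Fin.ext (by simp))
    have : f ⟨0, h⟩ = f 0 := rfl
    have : (f 0 : ℕ) < f 1 := hup
    omega
  | succ i ih =>
    obtain ⟨hi, hi'⟩ := ih (by omega)
    refine ⟨by rw [hi' h]; omega, fun h' => ?_⟩
    have := step (i + 1) h'
    have := no_turn i h'
    have := hi' h
    omega

lemma Copy.pathGraph_val_eq_add_or_add_eq {m n : ℕ} (hm : 0 < m)
    (f : Copy (pathGraph (m + 1)) (pathGraph n)) :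
    (∀ j, (f j : ℕ) = f 0 + j) ∨ (∀ j, (f j : ℕ) + j = f 0) := by
  obtain ⟨m, rfl⟩ : ∃ m', m = m' + 1 := ⟨m - 1, by omega⟩
  rcases lt_or_gt_of_ne (f.injective.ne (show (0 : Fin (m + 2)) ≠ 1 by simp)) with h | h
  · exact .inl (f.pathGraph_val_eq_add_of_lt h)
  · refine .inr fun j => ?_
    have := ((pathGraph.reverse n).toCopy.comp f).pathGraph_val_eq_add_of_lt (by simpa using h) j
    simp only [Iso.coe_toCopy, comp_apply, pathGraph.reverse_apply, Fin.val_rev] at this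
    omega

lemma pathGraph.iso_eq_id_or_eq_rev {n : ℕ} (σ : pathGraph n ≃g pathGraph n) :
    ⇑σ = id ∨ ⇑σ = Fin.rev := by
  obtain hn | ⟨m, rfl⟩ : n < 2 ∨ ∃ m, n = m + 2 := by
    rcases Nat.lt_or_ge n 2 with h | h
    · exact .inl h
    · exact .inr ⟨n - 2, by omega⟩
  · left; funext i; exact Fin.ext (by omega)
  have hlast := (σ 0).isLt
  rcases σ.toCopy.pathGraph_val_eq_add_or_add_eq (by omega) with h | h <;>
    simp only [Iso.coe_toCopy] at h <;> have := h (Fin.last _) <;>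
    simp only [Fin.val_last] at this
  · exact .inl (funext fun j => Fin.ext (by have := h j; simp only [id]; omega))
  · exact .inr (funext fun j => Fin.ext (by have := h j; simp only [Fin.val_rev]; omega))

def pathGraph.segment {m k : ℕ} (i : Fin (k + 1)) : Fin (m + 1) ↪ Fin (m + k + 1) :=
  ⟨fun j => ⟨i + j, by omega⟩, fun a b h => Fin.ext (by simpa using h)⟩

@[simp] lemma pathGraph.val_segment {m k : ℕ} (i : Fin (k + 1)) (j : Fin (m + 1)) :
    (segment i j : ℕ) = i + j := rfl

end PathGraph

section PathCopies

variable {V : Type*} {m k : ℕ} (p : Fin (m + 1) ↪ V)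

open pathGraph

lemma toSubgraph_adj_of_segment {f : Copy (pathGraph (m + k + 1)) (⊤ : SimpleGraph V)}
    {i : Fin (k + 1)} (hf : ∀ j, f (segment i j) = p j) (j : Fin m) :
    f.toSubgraph.Adj (p j.castSucc) (p j.succ) := by
  rw [← hf, ← hf, f.toSubgraph_adj_apply, pathGraph_adj]
  simp [add_assoc]

lemma segment_unique_of_toSubgraph_eq (hm : 0 < m)
    {f f' : Copy (pathGraph (m + k + 1)) (⊤ : SimpleGraph V)} {i i' : Fin (k + 1)}
    (hf : ∀ j, f (segment i j) = p j) (hf' : ∀ j, f' (segment i' j) = p j)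
    (h : f.toSubgraph = f'.toSubgraph) : i = i' ∧ f = f' := by
  obtain ⟨σ, hσ⟩ := f.exists_iso_of_toSubgraph_eq h
  have hinj : Injective f := f.injective
  have key : ∀ j, segment i j = σ (segment i' j) := fun j =>
    hinj (by rw [hf, ← comp_apply (f := f), ← hσ, hf'])
  have key0 := congrArg Fin.val (key 0)
  have key1 := congrArg Fin.val (key ⟨1, by omega⟩)
  rcases pathGraph.iso_eq_id_or_eq_rev σ with hid | hrev
  · rw [hid] at key0 hσ
    exact ⟨Fin.ext (by simpa using key0), Copy.ext fun a => (congrFun hσ a).symm⟩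
  · rw [hrev] at key0 key1
    simp only [val_segment, Fin.val_rev, Fin.val_zero] at key0 key1
    omega

lemma exists_segment_of_toSubgraph_adj (hm : 0 < m)
    (f : Copy (pathGraph (m + k + 1)) (⊤ : SimpleGraph V))
    (hp : ∀ j : Fin m, f.toSubgraph.Adj (p j.castSucc) (p j.succ)) :
    ∃ (g : Copy (pathGraph (m + k + 1)) (⊤ : SimpleGraph V)) (i : Fin (k + 1)),
      g.toSubgraph = f.toSubgraph ∧ ∀ j, g (segment i j) = p j := by
  have hverts : ∀ j, p j ∈ Set.range f := by
    intro j
    rw [← f.toSubgraph_verts]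
    rcases Nat.lt_or_ge j m with hj | hj
    · exact f.toSubgraph.edge_vert (hp ⟨j, hj⟩)
    · have : j = (⟨m - 1, by omega⟩ : Fin m).succ := Fin.ext (by simp; omega)
      exact this ▸ f.toSubgraph.edge_vert (hp _).symm
  choose σ hσ using hverts
  have hcons : ∀ u v : Fin (m + 1), (u : ℕ) + 1 = v → f.toSubgraph.Adj (p u) (p v) := by
    intro u v huv
    have hu : (⟨u, by omega⟩ : Fin m).castSucc = u := rfl
    have hv : (⟨u, by omega⟩ : Fin m).succ = v := Fin.ext (by simp [← huv])
    simpa only [hu, hv] using hp ⟨u, by omega⟩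
  let τ : Copy (pathGraph (m + 1)) (pathGraph (m + k + 1)) :=
    ⟨⟨σ, fun {u v} huv => by
      rw [← f.toSubgraph_adj_apply, hσ, hσ]
      rcases pathGraph_adj.1 huv with h | h
      exacts [hcons u v h, (hcons v u h).symm]⟩,
    fun u v h => p.injective (by rw [← hσ, ← hσ]; exact congrArg f h)⟩
  have hτ : ∀ j, τ j = σ j := fun _ => rfl
  have hlast := (σ (Fin.last _)).isLt
  rcases τ.pathGraph_val_eq_add_or_add_eq hm with hup | hdown
  · simp only [hτ] at hup
    have := hup (Fin.last _)
    refine ⟨f, ⟨σ 0, by simp only [Fin.val_last] at this; omega⟩, rfl, fun j => ?_⟩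
    rw [← hσ]
    congr 1
    exact Fin.ext (hup j).symm
  · simp only [hτ] at hdown
    have := hdown (Fin.last _)
    refine ⟨f.comp (reverse _).toCopy, ⟨m + k - σ 0, by simp only [Fin.val_last] at this; omega⟩,
      f.toSubgraph_comp_iso _, fun j => ?_⟩
    rw [← hσ]
    have := hdown j
    simp only [Copy.comp_apply, Iso.coe_toCopy, reverse_apply]
    congr 1
    exact Fin.ext (by simp only [Fin.val_rev, val_segment]; omega)

theorem card_subgraph_iso_pathGraph_containing_path [Fintype V] (hm : 0 < m) :
    Nat.card {H : (⊤ : SimpleGraph V).Subgraph // Nonempty (H.coe ≃g pathGraph (m + k + 1)) ∧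
      ∀ j : Fin m, H.Adj (p j.castSucc) (p j.succ)} =
      (k + 1) * (Fintype.card V - (m + 1)).descFactorial k := by
  let Φ : (Σ i : Fin (k + 1), {f : Copy (pathGraph (m + k + 1)) (⊤ : SimpleGraph V) //
      ∀ j, f (segment i j) = p j}) → {H : (⊤ : SimpleGraph V).Subgraph //
      Nonempty (H.coe ≃g pathGraph (m + k + 1)) ∧ ∀ j : Fin m, H.Adj (p j.castSucc) (p j.succ)} :=
    fun ⟨_, f, hf⟩ => ⟨f.toSubgraph, ⟨f.isoToSubgraph.symm⟩, toSubgraph_adj_of_segment p hf⟩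
  have hΦ : Bijective Φ := by
    refine ⟨fun ⟨i, f, hf⟩ ⟨i', f', hf'⟩ h => ?_, fun ⟨H, ⟨e⟩, hH⟩ => ?_⟩
    · obtain ⟨rfl, rfl⟩ := segment_unique_of_toSubgraph_eq p hm hf hf' (congrArg Subtype.val h)
      rfl
    · obtain ⟨f, rfl⟩ : H ∈ Set.range Copy.toSubgraph := by
        rw [Copy.range_toSubgraph]; exact ⟨e.symm⟩
      obtain ⟨g, i, hg, hgp⟩ := exists_segment_of_toSubgraph_adj p hm f hH
      exact ⟨⟨i, g, hgp⟩, Subtype.ext hg⟩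
  have hfiber : ∀ i : Fin (k + 1), Nat.card {f : Copy (pathGraph (m + k + 1)) (⊤ : SimpleGraph V) //
      ∀ j, f (segment i j) = p j} = (Fintype.card V - (m + 1)).descFactorial k := fun i => by
    have e : {f : Copy (pathGraph (m + k + 1)) (⊤ : SimpleGraph V) // ∀ j, f (segment i j) = p j}
        ≃ {g : Fin (m + k + 1) ↪ V // ∀ j, g (segment i j) = p j} :=
      (Copy.topEquiv _).subtypeEquiv fun _ => Iff.rfl
    rw [Nat.card_congr e, Nat.card_embedding_extending, Fintype.card_fin, Fintype.card_fin,
      show m + k + 1 - (m + 1) = k by omega]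
  rw [← Nat.card_congr (Equiv.ofBijective Φ hΦ), Nat.card_sigma]
  simp [hfiber]

end PathCopies

end SimpleGraph

theorem stmt_4_general (t : ℕ) (e1 e2 : Sym2 (Fin t))
    (he1 : e1 ∈ (⊤ : SimpleGraph (Fin t)).edgeSet)
    (he2 : e2 ∈ (⊤ : SimpleGraph (Fin t)).edgeSet)
    (hne : e1 ≠ e2) (hadj : ∃ v : Fin t, v ∈ e1 ∧ v ∈ e2) :
    Nat.card {H : (⊤ : SimpleGraph (Fin t)).Subgraph //
      Nonempty (H.coe ≃g pathGraph 5) ∧ e1 ∈ H.edgeSet ∧ e2 ∈ H.edgeSet} =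
      3 * (t - 3) * (t - 4) := by
  obtain ⟨b, ⟨a, rfl⟩, ⟨c, rfl⟩⟩ : ∃ b, (∃ a, e1 = s(b, a)) ∧ ∃ c, e2 = s(b, c) :=
    hadj.imp fun b hb => ⟨Sym2.mem_iff_exists.1 hb.1, Sym2.mem_iff_exists.1 hb.2⟩
  have hab : a ≠ b := (by simpa using he1 : b ≠ a).symm
  have hbc : b ≠ c := by simpa using he2
  have hac : a ≠ c := fun h => hne (h ▸ rfl)
  let p : Fin 3 ↪ Fin t := ⟨![a, b, c], by
    intro i j h; fin_cases i <;> fin_cases j <;> simp_all [eq_comm]⟩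
  have hcond : ∀ H : (⊤ : SimpleGraph (Fin t)).Subgraph,
      s(b, a) ∈ H.edgeSet ∧ s(b, c) ∈ H.edgeSet ↔ ∀ j : Fin 2, H.Adj (p j.castSucc) (p j.succ) := by
    intro H
    rw [Subgraph.mem_edgeSet, Subgraph.mem_edgeSet, H.adj_comm b a, Fin.forall_fin_two]
    rfl
  rw [Nat.card_congr (Equiv.subtypeEquivRight fun H => and_congr_right' (hcond H)),
    card_subgraph_iso_pathGraph_containing_path p (k := 2) (by norm_num)]
  simp only [Fintype.card_fin, Nat.descFactorial_succ, Nat.descFactorial_zero, Nat.sub_sub]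
  ring

theorem stmt_4 (t : ℕ) (ht : 5 ≤ t) (e1 e2 : Sym2 (Fin t))
    (he1 : e1 ∈ (⊤ : SimpleGraph (Fin t)).edgeSet)
    (he2 : e2 ∈ (⊤ : SimpleGraph (Fin t)).edgeSet)
    (hne : e1 ≠ e2) (hadj : ∃ v : Fin t, v ∈ e1 ∧ v ∈ e2) :
    Nat.card {H : (⊤ : SimpleGraph (Fin t)).Subgraph //
      Nonempty (H.coe ≃g pathGraph 5) ∧ e1 ∈ H.edgeSet ∧ e2 ∈ H.edgeSet} =
      3 * (t - 3) * (t - 4) :=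
  stmt_4_general t e1 e2 he1 he2 hne hadj
end

section
/- For an integer t ≥ 5, if e1 and e2 are two non-adjacent edges of the complete graph K_t, then the number of copies of the graph P_4^+ in K_t containing both e1 and e2 is exactly 8(t-4). -/
/-!
Label `P₄⁺` with centre `1`, leaves `0, 4` at the centre and path `1 - 2 - 3`. Its only pairs of
disjoint edges are `{01, 23}` and `{14, 23}`, exchanged by its unique non-trivial automorphism
`(0 4)`. So a copy through disjoint edges `e₁, e₂` amounts to deciding which of them plays `01`
(2 ways), orienting both (2 · 2 ways, which fixes the centre and its neighbour on the path), and
choosing the other leaf at the centre among the `t - 4` remaining vertices.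
-/

open SimpleGraph

/-- `P₄⁺`: the tree on 5 vertices obtained from the path `0-1-2-3` by attaching the pendant
edge `1-4` to the inner vertex `1` (degree sequence `(3,2,1,1,1)`). -/
def p4plus : SimpleGraph (Fin 5) :=
  SimpleGraph.fromEdgeSet {s(0, 1), s(1, 2), s(2, 3), s(1, 4)}

open Function

namespace SimpleGraph.Copy

variable {α β : Type*} {A : SimpleGraph α} {B : SimpleGraph β}

def ofInjective (f : α → β) (hf : Injective f) : Copy A (⊤ : SimpleGraph β) :=
  ⟨⟨f, fun h ↦ hf.ne h.ne⟩, hf⟩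

lemma toSubgraph_comp_iso_s5 (f : Copy A B) (σ : A ≃g A) :
    (f.comp σ.toCopy).toSubgraph = f.toSubgraph :=
  calc (f.comp σ.toCopy).toSubgraph = (Subgraph.map σ.toHom ⊤).map f.toHom :=
        Subgraph.map_comp _ _ _
    _ = f.toSubgraph := by rw [Subgraph.map_iso_top]

lemma exists_iso_of_toSubgraph_eq_s5 {f g : Copy A B} (h : f.toSubgraph = g.toSubgraph) :
    ∃ σ : A ≃g A, ∀ a, g a = f (σ a) := by
  suffices ∀ H H' : B.Subgraph, H = H' → ∀ (e : A ≃g H.coe) (e' : A ≃g H'.coe),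
      ∃ σ : A ≃g A, ∀ a, (e' a : β) = e (σ a) from
    this _ _ h f.isoToSubgraph g.isoToSubgraph
  rintro H _ rfl e e'
  exact ⟨e'.trans e.symm, by simp⟩

end SimpleGraph.Copy

lemma p4plus_adj (i j : Fin 5) : p4plus.Adj i j ↔
    (i = 0 ∧ j = 1 ∨ i = 1 ∧ j = 0) ∨ (i = 1 ∧ j = 2 ∨ i = 2 ∧ j = 1) ∨
    (i = 2 ∧ j = 3 ∨ i = 3 ∧ j = 2) ∨ (i = 1 ∧ j = 4 ∨ i = 4 ∧ j = 1) := by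
  fin_cases i <;> fin_cases j <;> simp [p4plus]

instance : DecidableRel p4plus.Adj := fun i j ↦ decidable_of_iff _ (p4plus_adj i j).symm

lemma p4plus_edgeSet : p4plus.edgeSet = {s(0, 1), s(1, 2), s(2, 3), s(1, 4)} := by
  rw [p4plus, edgeSet_fromEdgeSet, sdiff_eq_left]
  simp [Set.disjoint_left]

def p4plusSwap : p4plus ≃g p4plus := ⟨Equiv.swap 0 4, by decide⟩

lemma p4plus_iso_eq (σ : p4plus ≃g p4plus) : σ = Iso.refl ∨ σ = p4plusSwap := by
  have adj := fun i j ↦ (σ.map_adj_iff (v := i) (w := j)).mpr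
  have ne := fun i j (h : i ≠ j) ↦ σ.injective.ne h
  -- `1` is the only vertex with three neighbours, `2` the only neighbour of `1` that is not a
  -- leaf, and `3` the neighbour of `2` other than `1`.
  have h₁ : σ 1 = 1 := by
    have key : ∀ u a b c : Fin 5, a ≠ b → a ≠ c → b ≠ c →
        p4plus.Adj u a → p4plus.Adj u b → p4plus.Adj u c → u = 1 := by decide
    exact key _ _ _ _ (ne 0 2 (by decide)) (ne 0 4 (by decide)) (ne 2 4 (by decide))
      (adj 1 0 (by decide)) (adj 1 2 (by decide)) (adj 1 4 (by decide))
  have h₂ : σ 2 = 2 := by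
    have key : ∀ u x : Fin 5, p4plus.Adj 1 u → p4plus.Adj u x → x ≠ 1 → u = 2 := by decide
    exact key _ (σ 3) (h₁ ▸ adj 1 2 (by decide)) (adj 2 3 (by decide)) (h₁ ▸ ne 3 1 (by decide))
  have h₃ : σ 3 = 3 := by
    have key : ∀ u : Fin 5, p4plus.Adj 2 u → u ≠ 1 → u = 3 := by decide
    exact key _ (h₂ ▸ adj 2 3 (by decide)) (h₁ ▸ ne 3 1 (by decide))
  have leaf : ∀ u : Fin 5, p4plus.Adj 1 u → u ≠ 2 → u = 0 ∨ u = 4 := by decide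
  have h₀ := leaf _ (h₁ ▸ adj 1 0 (by decide)) (h₂ ▸ ne 0 2 (by decide))
  have h₄ := leaf _ (h₁ ▸ adj 1 4 (by decide)) (h₂ ▸ ne 4 2 (by decide))
  rcases h₀ with h₀ | h₀ <;> rcases h₄ with h₄ | h₄
  · exact absurd (h₀.trans h₄.symm) (ne 0 4 (by decide))
  · left; ext i; fin_cases i <;> simp [*]
  · right; ext i; fin_cases i <;> simp [p4plusSwap, Equiv.swap_apply_of_ne_of_ne, *]
  · exact absurd (h₀.trans h₄.symm) (ne 0 4 (by decide))

namespace SimpleGraph.Copy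

variable {β : Type*} {B : SimpleGraph β} {e₁ e₂ : Sym2 β}

lemma mem_toSubgraph_edgeSet_p4plus (f : Copy p4plus B) (e : Sym2 β) :
    e ∈ f.toSubgraph.edgeSet ↔
      e = s(f 0, f 1) ∨ e = s(f 1, f 2) ∨ e = s(f 2, f 3) ∨ e = s(f 1, f 4) := by
  simp [Subgraph.edgeSet_map, p4plus_edgeSet, Set.image_insert_eq]

lemma exists_toSubgraph_eq_of_disjoint_edges (f : Copy p4plus B)
    (he₁ : e₁ ∈ f.toSubgraph.edgeSet) (he₂ : e₂ ∈ f.toSubgraph.edgeSet)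
    (hdisj : ∀ v, ¬(v ∈ e₁ ∧ v ∈ e₂)) :
    ∃ g : Copy p4plus B, g.toSubgraph = f.toSubgraph ∧
      (s(g 0, g 1) = e₁ ∧ s(g 2, g 3) = e₂ ∨ s(g 0, g 1) = e₂ ∧ s(g 2, g 3) = e₁) := by
  rw [mem_toSubgraph_edgeSet_p4plus] at he₁ he₂
  rcases he₁ with rfl | rfl | rfl | rfl <;> rcases he₂ with rfl | rfl | rfl | rfl
  -- in the twelve other cases `e₁` and `e₂` share `f 1` or `f 2`
  all_goals first
    | exact ⟨f, rfl, .inl ⟨rfl, rfl⟩⟩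
    | exact ⟨f, rfl, .inr ⟨rfl, rfl⟩⟩
    | exact ⟨f.comp p4plusSwap.toCopy, f.toSubgraph_comp_iso_s5 _, .inl ⟨Sym2.eq_swap, rfl⟩⟩
    | exact ⟨f.comp p4plusSwap.toCopy, f.toSubgraph_comp_iso_s5 _, .inr ⟨Sym2.eq_swap, rfl⟩⟩
    | (have := hdisj (f 1); simp at this; done)
    | (have := hdisj (f 2); simp at this)

end SimpleGraph.Copy

section Frame

variable {V : Type*} {e₁ e₂ : Sym2 V}

-- The centre is the head of the first dart and is joined to the tail of the second dart.
abbrev P4plusFrame (e₁ e₂ : Sym2 V) : Type _ :=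
  {pq : (⊤ : SimpleGraph V).Dart × (⊤ : SimpleGraph V).Dart //
    pq.1.edge = e₁ ∧ pq.2.edge = e₂ ∨ pq.1.edge = e₂ ∧ pq.2.edge = e₁} ×
  {v : V // v ∉ e₁ ∧ v ∉ e₂}

abbrev P4plusCopiesThrough (e₁ e₂ : Sym2 V) : Type _ :=
  {H : (⊤ : SimpleGraph V).Subgraph //
    Nonempty (H.coe ≃g p4plus) ∧ e₁ ∈ H.edgeSet ∧ e₂ ∈ H.edgeSet}

namespace P4plusFrame

def labelling (x : P4plusFrame e₁ e₂) : Fin 5 → V :=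
  ![x.1.1.1.fst, x.1.1.1.snd, x.1.1.2.fst, x.1.1.2.snd, x.2.1]

lemma labelling_injective (hdisj : ∀ v, ¬(v ∈ e₁ ∧ v ∈ e₂)) (x : P4plusFrame e₁ e₂) :
    Injective x.labelling := by
  obtain ⟨⟨⟨p, q⟩, hpq⟩, v, hv₁, hv₂⟩ := x
  have hp := p.fst_ne_snd
  have hq := q.fst_ne_snd
  have hpq' : ∀ u, ¬(u ∈ p.edge ∧ u ∈ q.edge) := by
    rcases hpq with ⟨rfl, rfl⟩ | ⟨rfl, rfl⟩
    · exact hdisj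
    · exact fun u h ↦ hdisj u h.symm
  have hv : v ∉ p.edge ∧ v ∉ q.edge := by
    rcases hpq with ⟨rfl, rfl⟩ | ⟨rfl, rfl⟩ <;> tauto
  simp only [Dart.edge, Sym2.mem_iff] at hpq' hv
  intro i j hij
  fin_cases i <;> fin_cases j <;> simp_all [labelling]

def copy (hdisj : ∀ v, ¬(v ∈ e₁ ∧ v ∈ e₂)) (x : P4plusFrame e₁ e₂) :
    Copy p4plus (⊤ : SimpleGraph V) :=
  .ofInjective x.labelling (x.labelling_injective hdisj)

def toCopiesThrough (hdisj : ∀ v, ¬(v ∈ e₁ ∧ v ∈ e₂)) (x : P4plusFrame e₁ e₂) :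
    P4plusCopiesThrough e₁ e₂ := by
  refine ⟨(x.copy hdisj).toSubgraph, ⟨(x.copy hdisj).isoToSubgraph.symm⟩, ?_⟩
  simp only [Copy.mem_toSubgraph_edgeSet_p4plus]
  rcases x.1.2 with ⟨h₁, h₂⟩ | ⟨h₁, h₂⟩
  · exact ⟨.inl h₁.symm, .inr (.inr (.inl h₂.symm))⟩
  · exact ⟨.inr (.inr (.inl h₂.symm)), .inl h₁.symm⟩

lemma toCopiesThrough_injective (hdisj : ∀ v, ¬(v ∈ e₁ ∧ v ∈ e₂)) :
    Injective (toCopiesThrough hdisj) := by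
  intro x y hxy
  obtain ⟨σ, hσ⟩ := Copy.exists_iso_of_toSubgraph_eq_s5 (congrArg Subtype.val hxy)
  change ∀ i, y.labelling i = x.labelling (σ i) at hσ
  rcases p4plus_iso_eq σ with rfl | rfl
  · have h i : x.labelling i = y.labelling i := (hσ i).symm
    exact Prod.ext (Subtype.ext (Prod.ext (Dart.ext _ _ (Prod.ext (h 0) (h 1)))
      (Dart.ext _ _ (Prod.ext (h 2) (h 3))))) (Subtype.ext (h 4))
  · have h₀ : y.labelling 0 ∈ e₁ ∨ y.labelling 0 ∈ e₂ := by
      rcases y.1.2 with ⟨h, -⟩ | ⟨h, -⟩ <;> simp [labelling, ← h, Dart.edge]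
    have h₄ : y.labelling 0 = x.2 := hσ 0
    rw [h₄] at h₀
    exact absurd h₀ (not_or.mpr x.2.2)

lemma toCopiesThrough_surjective (hdisj : ∀ v, ¬(v ∈ e₁ ∧ v ∈ e₂)) :
    Surjective (toCopiesThrough hdisj) := by
  rintro ⟨H, ⟨φ⟩, he₁, he₂⟩
  obtain ⟨f, -, rfl⟩ := Copy.toSubgraph_surjOn (Set.mem_ofPred.mpr ⟨φ.symm⟩)
  obtain ⟨g, hgf, hg⟩ := f.exists_toSubgraph_eq_of_disjoint_edges he₁ he₂ hdisj
  have hv : g 4 ∉ e₁ ∧ g 4 ∉ e₂ := by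
    have hg_inj : Injective g := g.injective
    rcases hg with ⟨rfl, rfl⟩ | ⟨rfl, rfl⟩ <;> simp [hg_inj.eq_iff]
  let x : P4plusFrame e₁ e₂ :=
    (⟨(⟨(g 0, g 1), g.injective.ne (by decide)⟩, ⟨(g 2, g 3), g.injective.ne (by decide)⟩), hg⟩,
      ⟨g 4, hv⟩)
  refine ⟨x, Subtype.ext ?_⟩
  change (x.copy hdisj).toSubgraph = f.toSubgraph
  rw [← hgf]
  congr 1
  ext i
  fin_cases i <;> rfl

end P4plusFrame

end Frame

section Card

open Finset

variable {V : Type*} [Fintype V] [DecidableEq V] {e₁ e₂ : Sym2 V}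

lemma card_dartPairs_of_edges (he₁ : e₁ ∈ (⊤ : SimpleGraph V).edgeSet)
    (he₂ : e₂ ∈ (⊤ : SimpleGraph V).edgeSet) (hne : e₁ ≠ e₂) :
    Nat.card {pq : (⊤ : SimpleGraph V).Dart × (⊤ : SimpleGraph V).Dart //
      pq.1.edge = e₁ ∧ pq.2.edge = e₂ ∨ pq.1.edge = e₂ ∧ pq.2.edge = e₁} = 8 := by
  rw [Nat.card_eq_fintype_card, Fintype.card_subtype, filter_or, card_union_of_disjoint,
    ← univ_product_univ,
    filter_product (fun p : Dart ⊤ ↦ p.edge = e₁) (fun q : Dart ⊤ ↦ q.edge = e₂),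
    filter_product (fun p : Dart ⊤ ↦ p.edge = e₂) (fun q : Dart ⊤ ↦ q.edge = e₁),
    card_product, card_product, dart_edge_fiber_card _ _ he₁, dart_edge_fiber_card _ _ he₂]
  rw [disjoint_filter]
  exact fun _ _ h h' ↦ hne (h.1.symm.trans h'.1)

lemma card_not_mem_disjoint_edges (he₁ : e₁ ∈ (⊤ : SimpleGraph V).edgeSet)
    (he₂ : e₂ ∈ (⊤ : SimpleGraph V).edgeSet) (hdisj : ∀ v, ¬(v ∈ e₁ ∧ v ∈ e₂)) :
    Nat.card {v : V // v ∉ e₁ ∧ v ∉ e₂} = Fintype.card V - 4 := by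
  have hcard : #(e₁.toFinset ∪ e₂.toFinset) = 4 := by
    rw [card_union_of_disjoint (by simpa [Finset.disjoint_left] using hdisj),
      Sym2.card_toFinset_of_not_isDiag _ (not_isDiag_of_mem_edgeSet _ he₁),
      Sym2.card_toFinset_of_not_isDiag _ (not_isDiag_of_mem_edgeSet _ he₂)]
  rw [Nat.card_eq_fintype_card, Fintype.card_subtype, ← hcard, ← card_compl]
  congr 1
  ext v
  simp

end Card

theorem stmt_5_general (t : ℕ) (e1 e2 : Sym2 (Fin t))
    (he1 : e1 ∈ (⊤ : SimpleGraph (Fin t)).edgeSet)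
    (he2 : e2 ∈ (⊤ : SimpleGraph (Fin t)).edgeSet)
    (hnadj : ∀ v : Fin t, ¬(v ∈ e1 ∧ v ∈ e2)) :
    Nat.card {H : (⊤ : SimpleGraph (Fin t)).Subgraph //
      Nonempty (H.coe ≃g p4plus) ∧ e1 ∈ H.edgeSet ∧ e2 ∈ H.edgeSet} = 8 * (t - 4) := by
  have hne : e1 ≠ e2 := fun h ↦ hnadj _ ⟨e1.out_fst_mem, h ▸ e1.out_fst_mem⟩
  rw [← Nat.card_congr (Equiv.ofBijective _ ⟨P4plusFrame.toCopiesThrough_injective hnadj,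
      P4plusFrame.toCopiesThrough_surjective hnadj⟩),
    Nat.card_prod, card_dartPairs_of_edges he1 he2 hne, card_not_mem_disjoint_edges he1 he2 hnadj,
    Fintype.card_fin]

theorem stmt_5 (t : ℕ) (ht : 5 ≤ t) (e1 e2 : Sym2 (Fin t))
    (he1 : e1 ∈ (⊤ : SimpleGraph (Fin t)).edgeSet)
    (he2 : e2 ∈ (⊤ : SimpleGraph (Fin t)).edgeSet)
    (hnadj : ∀ v : Fin t, ¬(v ∈ e1 ∧ v ∈ e2)) :
    Nat.card {H : (⊤ : SimpleGraph (Fin t)).Subgraph //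
      Nonempty (H.coe ≃g p4plus) ∧ e1 ∈ H.edgeSet ∧ e2 ∈ H.edgeSet} = 8 * (t - 4) :=
  stmt_5_general t e1 e2 he1 he2 hnadj
end

section
/- Let t ≥ 5 and suppose the edges of K_t are colored so that exactly one color class consists of three edges forming a star K_{1,3}, and every other color class is a single edge. Then the number of copies of P_5 in K_t containing at least two edges of the same color is exactly 9(t-3)(t-4). -/
/-!
Two distinct edges of the same colour must both lie in the colour class of the star, so a copy of
`P₅` is counted exactly when it passes through the centre `v` at an interior position whose two
path-neighbours are leaves of the star. It is easier to count labelled copies, i.e. injections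
`Fin 5 ↪ Fin t`: the position of `v` can be chosen in 3 ways, the ordered pair of leaves around it
in 6 ways, and the two remaining vertices in `(t - 3)(t - 4)` ways. Every unlabelled copy comes from
`|Aut P₅| = 2` labelled ones, which gives `9 (t - 3)(t - 4)`.
-/

open SimpleGraph Finset

theorem Function.Embedding.card_filter_trans {κ α β : Type*} [Fintype κ] [Fintype α] [Fintype β]
    (ι : κ ↪ α) (P : (κ ↪ β) → Prop) :
    Nat.card {f : α ↪ β // P (ι.trans f)} = Nat.card {g : κ ↪ β // P g} *
      (Fintype.card β - Fintype.card κ).descFactorial (Fintype.card α - Fintype.card κ) := by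
  classical
  let C := (Set.range ι)ᶜ
  let e : κ ⊕ C ≃ α := ((Equiv.ofInjective ι ι.injective).sumCongr (.refl C)).trans
    (Equiv.Set.sumCompl (Set.range ι))
  let E : (α ↪ β) ≃ Σ g : κ ↪ β, (C ↪ ↥(Set.range g)ᶜ) :=
    (Equiv.embeddingCongr e (.refl β)).symm.trans Equiv.sumEmbeddingEquivSigmaEmbeddingRestricted
  have hE (f : α ↪ β) : (E f).1 = ι.trans f := rfl
  have hextensions (g : κ ↪ β) : Nat.card (C ↪ ↥(Set.range g)ᶜ) =
      (Fintype.card β - Fintype.card κ).descFactorial (Fintype.card α - Fintype.card κ) := by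
    rw [Nat.card_eq_fintype_card, Fintype.card_embedding_eq, Fintype.card_compl_set,
      Fintype.card_range, Fintype.card_compl_set, Fintype.card_range]
  rw [Nat.card_congr ((E.subtypeEquiv fun f ↦ by rw [hE]).trans (Equiv.subtypeSigmaEquiv _ P)),
    Nat.card_sigma]
  simp only [hextensions, Finset.sum_const, Finset.card_univ, smul_eq_mul,
    Nat.card_eq_fintype_card]

theorem Nat.card_exists_eq_sum {ι α : Type*} [Fintype ι] [Finite α] (Q : ι → α → Prop)
    (hQ : ∀ a i j, Q i a → Q j a → i = j) :
    Nat.card {a // ∃ i, Q i a} = ∑ i, Nat.card {a // Q i a} := by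
  rw [← Nat.card_sigma]
  refine (Nat.card_eq_of_bijective (fun s : Σ i, {a // Q i a} ↦ ⟨s.2.1, s.1, s.2.2⟩)
    ⟨?_, fun ⟨a, i, ha⟩ ↦ ⟨⟨i, a, ha⟩, rfl⟩⟩).symm
  rintro ⟨i, a, ha⟩ ⟨j, b, hb⟩ h
  obtain rfl : a = b := congrArg Subtype.val h
  obtain rfl := hQ a i j ha hb
  rfl

namespace SimpleGraph

variable {α β : Type*} {A : SimpleGraph α} {B : SimpleGraph β}

namespace Copy

lemma toSubgraph_coeCopy_comp {H : B.Subgraph} (e : A ≃g H.coe) :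
    (H.coeCopy.comp e.toCopy).toSubgraph = H := by
  simp [Copy.toSubgraph, Subgraph.coeCopy, Copy.comp, Subgraph.map_comp]

lemma card_toSubgraph_fiber (H : B.Subgraph) :
    Nat.card {f : Copy A B // f.toSubgraph = H} = Nat.card (A ≃g H.coe) := by
  refine (Nat.card_eq_of_bijective (fun e ↦ ⟨H.coeCopy.comp e.toCopy, toSubgraph_coeCopy_comp e⟩)
    ⟨fun e e' h ↦ ?_, ?_⟩).symm
  · ext a
    exact DFunLike.congr_fun (congrArg Subtype.val h) a
  · rintro ⟨f, rfl⟩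
    exact ⟨f.isoToSubgraph, rfl⟩

theorem card_filter_toSubgraph [Finite α] [Finite β] (P : B.Subgraph → Prop) :
    Nat.card {f : Copy A B // P f.toSubgraph} =
      Nat.card {H : B.Subgraph // Nonempty (H.coe ≃g A) ∧ P H} * Nat.card (A ≃g A) := by
  have := Fintype.ofFinite {H : B.Subgraph // Nonempty (H.coe ≃g A) ∧ P H}
  have : Finite (Copy A B) := .of_injective _ DFunLike.coe_injective
  let F : {f : Copy A B // P f.toSubgraph} → {H : B.Subgraph // Nonempty (H.coe ≃g A) ∧ P H} :=
    fun f ↦ ⟨f.1.toSubgraph, ⟨f.1.isoToSubgraph.symm⟩, f.2⟩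
  have hfiber (H : {H : B.Subgraph // Nonempty (H.coe ≃g A) ∧ P H}) :
      Nat.card {f // F f = H} = Nat.card (A ≃g A) := by
    obtain ⟨H, ⟨φ⟩, hH⟩ := H
    calc Nat.card {f // F f = ⟨H, ⟨φ⟩, hH⟩}
        = Nat.card {f : Copy A B // f.toSubgraph = H} := Nat.card_congr
          { toFun f := ⟨f.1.1, congrArg Subtype.val f.2⟩
            invFun f := ⟨⟨f.1, by rw [f.2]; exact hH⟩, Subtype.ext f.2⟩ }
      _ = Nat.card (A ≃g H.coe) := card_toSubgraph_fiber H
      _ = Nat.card (A ≃g A) := Nat.card_congr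
          { toFun e := e.trans φ
            invFun e := e.trans φ.symm
            left_inv e := by ext; simp
            right_inv e := by ext; simp }
  rw [← Nat.card_congr (Equiv.sigmaFiberEquiv F), Nat.card_sigma]
  simp [hfiber]

def topEquiv_s18 (A : SimpleGraph α) : Copy A (⊤ : SimpleGraph β) ≃ (α ↪ β) where
  toFun f := f.toEmbedding
  invFun g := ⟨⟨g, fun h ↦ g.injective.ne h.ne⟩, g.injective⟩

lemma toSubgraph_adj (f : Copy A B) (p q : β) :
    f.toSubgraph.Adj p q ↔ ∃ i j, A.Adj i j ∧ f i = p ∧ f j = q := by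
  simp [Subgraph.map_adj, Relation.Map]

end Copy

def Iso.selfEquivSubtypePerm (A : SimpleGraph α) :
    (A ≃g A) ≃ {σ : Equiv.Perm α // ∀ i j, A.Adj (σ i) (σ j) ↔ A.Adj i j} where
  toFun e := ⟨e.toEquiv, fun _ _ ↦ e.map_rel_iff⟩
  invFun σ := ⟨σ.1, σ.2 _ _⟩

lemma card_pathGraph_five_iso : Nat.card (pathGraph 5 ≃g pathGraph 5) = 2 := by
  rw [Nat.card_congr (Iso.selfEquivSubtypePerm _)]
  simp only [pathGraph_adj]
  rw [Nat.card_eq_fintype_card]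
  decide

end SimpleGraph

def pathWindow {k : ℕ} (w : Fin (k + 1)) : Fin 3 ↪ Fin (k + 3) :=
  ⟨fun j ↦ ⟨w + j, by omega⟩, fun i j h ↦ by simpa [Fin.ext_iff] using h⟩

@[simp] lemma pathWindow_val {k : ℕ} (w : Fin (k + 1)) (j : Fin 3) :
    (pathWindow w j : ℕ) = w + j := rfl

lemma pathGraph_adj_adj_iff {k : ℕ} {i j₁ j₂ : Fin (k + 3)} :
    (pathGraph (k + 3)).Adj i j₁ ∧ (pathGraph (k + 3)).Adj i j₂ ∧ j₁ ≠ j₂ ↔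
      ∃ w, pathWindow w 1 = i ∧ (pathWindow w 0 = j₁ ∧ pathWindow w 2 = j₂ ∨
        pathWindow w 0 = j₂ ∧ pathWindow w 2 = j₁) := by
  simp only [pathGraph_adj, Fin.ext_iff, pathWindow_val, ne_eq, Fin.isValue, Fin.coe_ofNat_eq_mod,
    Nat.one_mod, Nat.zero_mod, Nat.mod_succ, add_zero]
  constructor
  · rintro ⟨h₁, h₂, hne⟩
    exact ⟨⟨i - 1, by omega⟩, by dsimp only; omega⟩
  · rintro ⟨w, hi, h⟩
    omega

variable {V : Type*}

def IsCherryAt (v : V) (S : Finset V) (g : Fin 3 → V) : Prop :=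
  g 1 = v ∧ g 0 ∈ S ∧ g 2 ∈ S

lemma card_isCherryAt [DecidableEq V] {v : V} {S : Finset V} (hv : v ∉ S) :
    Nat.card {g : Fin 3 ↪ V // IsCherryAt v S g} = #S.offDiag := by
  rw [← Nat.card_eq_finsetCard]
  refine Nat.card_congr
    { toFun g := ⟨(g.1 0, g.1 2), mem_offDiag.2 ⟨g.2.2.1, g.2.2.2, g.1.injective.ne (by decide)⟩⟩
      invFun p := ⟨⟨![p.1.1, v, p.1.2], ?_⟩, rfl, (mem_offDiag.1 p.2).1, (mem_offDiag.1 p.2).2.1⟩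
      left_inv g := ?_
      right_inv p := rfl }
  · obtain ⟨⟨x, y⟩, hp⟩ := p
    obtain ⟨hx, hy, hxy⟩ := mem_offDiag.1 hp
    have hxv : x ≠ v := ne_of_mem_of_not_mem hx hv
    have hyv : y ≠ v := ne_of_mem_of_not_mem hy hv
    intro i j h
    fin_cases i <;> fin_cases j <;> simp_all [eq_comm]
  · ext i
    fin_cases i <;> simp [g.2.1]

theorem card_exists_isCherryAt [Fintype V] [DecidableEq V] {v : V} {S : Finset V} (hv : v ∉ S)
    (k : ℕ) :
    Nat.card {f : Fin (k + 3) ↪ V // ∃ w, IsCherryAt v S ((pathWindow w).trans f)} =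
      (k + 1) * (#S.offDiag * (Fintype.card V - 3).descFactorial k) := by
  have hwindow (w : Fin (k + 1)) :
      Nat.card {f : Fin (k + 3) ↪ V // IsCherryAt v S ((pathWindow w).trans f)} =
        #S.offDiag * (Fintype.card V - 3).descFactorial k := by
    rw [(pathWindow w).card_filter_trans (fun g ↦ IsCherryAt v S g), card_isCherryAt hv]
    simp
  rw [Nat.card_exists_eq_sum]
  · simp [hwindow]
  · intro f w w' hw hw'
    have := f.injective (hw.1.trans hw'.1.symm)
    simp only [Fin.ext_iff, pathWindow_val] at this ⊢
    omega

theorem SimpleGraph.Copy.exists_adj_adj_iff {G : SimpleGraph V} {k : ℕ}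
    (f : Copy (pathGraph (k + 3)) G) (v : V) (S : Finset V) :
    (∃ x ∈ S, ∃ y ∈ S, x ≠ y ∧ f.toSubgraph.Adj v x ∧ f.toSubgraph.Adj v y) ↔
      ∃ w, IsCherryAt v S ((pathWindow w).trans f.toEmbedding) := by
  simp only [Copy.toSubgraph_adj]
  constructor
  · rintro ⟨x, hx, y, hy, hxy, ⟨i, j₁, hij₁, hi, rfl⟩, ⟨i', j₂, hij₂, hi', rfl⟩⟩
    obtain rfl := f.injective (hi'.trans hi.symm)
    obtain ⟨w, rfl, hends⟩ := pathGraph_adj_adj_iff.1 ⟨hij₁, hij₂, fun h ↦ hxy (congrArg f h)⟩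
    rcases hends with ⟨rfl, rfl⟩ | ⟨rfl, rfl⟩
    exacts [⟨w, hi, hx, hy⟩, ⟨w, hi, hy, hx⟩]
  · rintro ⟨w, hv, h₀, h₂⟩
    obtain ⟨h₁₀, h₁₂, -⟩ := pathGraph_adj_adj_iff.2 ⟨w, rfl, Or.inl ⟨rfl, rfl⟩⟩
    exact ⟨_, h₀, _, h₂, f.injective.ne ((pathWindow w).injective.ne (by decide)),
      ⟨_, _, h₁₀, hv, rfl⟩, ⟨_, _, h₁₂, hv, rfl⟩⟩

theorem SimpleGraph.Subgraph.exists_pair_same_color_iff {κ : Type*} {G : SimpleGraph V}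
    {c : Sym2 V → κ} {r : κ} {v : V} {S : Set V}
    (hstar : ∀ e ∈ G.edgeSet, c e = r ↔ ∃ x ∈ S, e = s(v, x))
    (hsingle : ∀ e ∈ G.edgeSet, ∀ f ∈ G.edgeSet, e ≠ f → c e = c f → c e = r)
    (H : G.Subgraph) :
    (∃ e ∈ H.edgeSet, ∃ f ∈ H.edgeSet, e ≠ f ∧ c e = c f) ↔
      ∃ x ∈ S, ∃ y ∈ S, x ≠ y ∧ H.Adj v x ∧ H.Adj v y := by
  constructor
  · rintro ⟨e, he, f, hf, hef, hc⟩
    have he' := H.edgeSet_subset he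
    have hf' := H.edgeSet_subset hf
    obtain ⟨x, hx, rfl⟩ := (hstar e he').1 (hsingle e he' f hf' hef hc)
    obtain ⟨y, hy, rfl⟩ := (hstar f hf').1 (hsingle f hf' _ he' hef.symm hc.symm)
    exact ⟨x, hx, y, hy, fun h ↦ hef (h ▸ rfl), he, hf⟩
  · rintro ⟨x, hx, y, hy, hxy, hvx, hvy⟩
    refine ⟨s(v, x), hvx, s(v, y), hvy, fun h ↦ hxy (Sym2.congr_right.1 h), ?_⟩
    rw [(hstar _ (H.edgeSet_subset hvx)).2 ⟨x, hx, rfl⟩,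
      (hstar _ (H.edgeSet_subset hvy)).2 ⟨y, hy, rfl⟩]

theorem stmt_18_general (t : ℕ) (c : Sym2 (Fin t) → ℕ) (r : ℕ)
    (v a b d : Fin t) (hva : v ≠ a) (hvb : v ≠ b) (hvd : v ≠ d)
    (hab : a ≠ b) (had : a ≠ d) (hbd : b ≠ d)
    (hstar : {e ∈ (⊤ : SimpleGraph (Fin t)).edgeSet | c e = r} =
      ({s(v, a), s(v, b), s(v, d)} : Set (Sym2 (Fin t))))
    (hsingle : ∀ e ∈ (⊤ : SimpleGraph (Fin t)).edgeSet,
      ∀ f ∈ (⊤ : SimpleGraph (Fin t)).edgeSet, e ≠ f → c e = c f → c e = r) :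
    Nat.card {H : (⊤ : SimpleGraph (Fin t)).Subgraph //
      Nonempty (H.coe ≃g pathGraph 5) ∧
      ∃ e ∈ H.edgeSet, ∃ f ∈ H.edgeSet, e ≠ f ∧ c e = c f} = 9 * (t - 3) * (t - 4) := by
  classical
  set S : Finset (Fin t) := {a, b, d}
  have hvS : v ∉ S := by simp [S, hva, hvb, hvd]
  have hS : #S.offDiag = 6 := by
    rw [offDiag_card, card_eq_three.2 ⟨a, b, d, hab, had, hbd, rfl⟩]
  have hcolor (e) (he : e ∈ (⊤ : SimpleGraph (Fin t)).edgeSet) :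
      c e = r ↔ ∃ x ∈ (S : Set (Fin t)), e = s(v, x) := by
    have := Set.ext_iff.1 hstar e
    simp only [Set.mem_ofPred_eq, he, true_and] at this
    simp [this, S]
  refine Nat.eq_of_mul_eq_mul_right two_pos ?_
  calc _ = Nat.card {f : Copy (pathGraph 5) ⊤ //
        ∃ e ∈ f.toSubgraph.edgeSet, ∃ e' ∈ f.toSubgraph.edgeSet, e ≠ e' ∧ c e = c e'} := by
        rw [← card_pathGraph_five_iso]
        exact (Copy.card_filter_toSubgraph _).symm
    _ = Nat.card {g : Fin 5 ↪ Fin t // ∃ w, IsCherryAt v S ((pathWindow w).trans g)} :=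
        Nat.card_congr <| (Copy.topEquiv_s18 _).subtypeEquiv fun f ↦ by
          rw [Subgraph.exists_pair_same_color_iff hcolor hsingle]
          simp only [Finset.mem_coe]
          exact f.exists_adj_adj_iff v S
    _ = 9 * (t - 3) * (t - 4) * 2 := by
        rw [card_exists_isCherryAt hvS, hS, Fintype.card_fin]
        simp only [Nat.descFactorial, show t - 3 - 1 = t - 4 by omega, Nat.sub_zero]
        ring

theorem stmt_18 (t : ℕ) (ht : 5 ≤ t) (c : Sym2 (Fin t) → ℕ) (r : ℕ)
    (v a b d : Fin t) (hva : v ≠ a) (hvb : v ≠ b) (hvd : v ≠ d)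
    (hab : a ≠ b) (had : a ≠ d) (hbd : b ≠ d)
    (hstar : {e ∈ (⊤ : SimpleGraph (Fin t)).edgeSet | c e = r} =
      ({s(v, a), s(v, b), s(v, d)} : Set (Sym2 (Fin t))))
    (hsingle : ∀ e ∈ (⊤ : SimpleGraph (Fin t)).edgeSet,
      ∀ f ∈ (⊤ : SimpleGraph (Fin t)).edgeSet, e ≠ f → c e = c f → c e = r) :
    Nat.card {H : (⊤ : SimpleGraph (Fin t)).Subgraph //
      Nonempty (H.coe ≃g pathGraph 5) ∧
      ∃ e ∈ H.edgeSet, ∃ f ∈ H.edgeSet, e ≠ f ∧ c e = c f} = 9 * (t - 3) * (t - 4) :=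
  stmt_18_general t c r v a b d hva hvb hvd hab had hbd hstar hsingle
end
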